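/- arXiv:2306.04084 — 3 statements merged into one kernel-verified Lean document; each statement's English description precedes it below -/
import Mathlib

section
/- Let p ≥ 1 and let k_i, k_j > 0 be real numbers. Let A and B be symmetric real p×p matrices with A ≻ O and −k_j·B ≺ k_i·A. Define Y* := (k_i k_j/(k_i+k_j)) · A^{1/2} (I − A^{−1/2} B A^{−1/2})₊ A^{1/2}. Then Y* is feasible for the problem max over Y ⪰ O with −k_j·B ≺ Y ≺ k_i·A of k_i·log det(A − Y/k_i) + k_j·log det(B + Y/k_j), i.e. Y* ⪰ O and −k_j·B ≺ Y* ≺ k_i·A, and for every symmetric Y with Y ⪰ O and −k_j·B ≺ Y ≺ k_i·A one has k_i·log det(A − Y/k_i) + k_j·log det(B + Y/k_j) ≤ k_i·log det(A − Y*/k_i) + k_j·log det(B + Y*/k_j). -/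
/-!
Write `A^{1/2}` for `CFC.sqrt A` and diagonalize `I − A^{−1/2} B A^{−1/2} = U diag(l) Uᵀ`. The
congruence `X ↦ T X Tᵀ` by `T = A^{1/2} U` turns `I`, `diag(1 − l)` and
`diag(c · max(l, 0))`, with `c = kᵢkⱼ/(kᵢ+kⱼ)`, into `A`, `B` and `Y*`; it preserves (semi)definiteness and
shifts the objective by the constant `(kᵢ+kⱼ) log det(TTᵀ)`, so it suffices to treat
`A = I`, `B = diag(1 − l)`. There `Y*` is diagonal and its feasibility is entrywise. Optimality
comes from concavity of `log det`, in the form `log det Y ≤ log det X + tr(X⁻¹Y) − p`, applied at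
the two slack matrices of `Y*`, which are diagonal: the first-order terms become a sum over the
diagonal entries `Zᵢᵢ ≥ 0` of a feasible `Z` of scalar inequalities, with equality wherever
`lᵢ > 0` because the two slacks then coincide.
-/

/-- The positive part `X₊` of a symmetric (Hermitian) real matrix `X`: with spectral
decomposition `X = U diag(λ₁,…,λ_p) Uᵀ`, it is `U diag(max(λ₁,0),…,max(λ_p,0)) Uᵀ`
(junk value `0` if `X` is not Hermitian). -/
noncomputable def matPosPart {p : ℕ} (X : Matrix (Fin p) (Fin p) ℝ) :
    Matrix (Fin p) (Fin p) ℝ :=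
  if hX : X.IsHermitian then
    (hX.eigenvectorUnitary : Matrix (Fin p) (Fin p) ℝ) *
      Matrix.diagonal (fun i => max (hX.eigenvalues i) 0) *
      (star hX.eigenvectorUnitary : Matrix (Fin p) (Fin p) ℝ)
  else 0

open scoped MatrixOrder

open Matrix

namespace Matrix

variable {n R : Type*}

section Diagonal

variable [DecidableEq n] [Ring R]

lemma diagonal_one_sub (d : n → R) : diagonal (1 - d) = 1 - diagonal d := by
  rw [← diagonal_one', diagonal_sub]; rfl

lemma one_sub_smul_diagonal (c : R) (d : n → R) :
    1 - c • diagonal d = diagonal fun i => 1 - c * d i := by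
  rw [← diagonal_one, ← diagonal_smul, diagonal_sub]; rfl

lemma diagonal_add_smul_diagonal (c : R) (d e : n → R) :
    diagonal d + c • diagonal e = diagonal fun i => d i + c * e i := by
  rw [← diagonal_smul, diagonal_add]; rfl

end Diagonal

lemma posDef_sub_inv_smul_iff {k : ℝ} (hk : 0 < k) {A Y : Matrix n n ℝ} :
    (A - k⁻¹ • Y).PosDef ↔ (k • A - Y).PosDef := by
  rw [show k • A - Y = k • (A - k⁻¹ • Y) by rw [smul_sub, smul_inv_smul₀ hk.ne']]
  refine ⟨fun h => h.smul hk, fun h => ?_⟩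
  simpa [smul_smul, hk.ne'] using h.smul (inv_pos.2 hk)

lemma posDef_add_inv_smul_iff {k : ℝ} (hk : 0 < k) {B Y : Matrix n n ℝ} :
    (B + k⁻¹ • Y).PosDef ↔ (Y + k • B).PosDef := by
  rw [show Y + k • B = k • (B + k⁻¹ • Y) by rw [smul_add, smul_inv_smul₀ hk.ne', add_comm]]
  refine ⟨fun h => h.smul hk, fun h => ?_⟩
  simpa [smul_smul, hk.ne'] using h.smul (inv_pos.2 hk)

variable [Fintype n]

section CommSemiring

variable [CommSemiring R] [StarRing R]

def congruence (T : Matrix n n R) : Matrix n n R →ₗ[R] Matrix n n R where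
  toFun X := T * X * star T
  map_add' X Y := by simp only [Matrix.mul_add, Matrix.add_mul]
  map_smul' c X := by simp only [Matrix.mul_smul, Matrix.smul_mul, RingHom.id_apply]

@[simp]
lemma congruence_apply (T X : Matrix n n R) : congruence T X = T * X * star T := rfl

lemma congruence_mul (S T X : Matrix n n R) :
    congruence (S * T) X = congruence S (congruence T X) := by
  simp only [congruence_apply, star_mul, Matrix.mul_assoc]

end CommSemiring

variable [DecidableEq n]

section CommRing

variable [CommRing R] [StarRing R]

lemma det_congruence (T X : Matrix n n R) :
    (congruence T X).det = X.det * (congruence T 1).det := by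
  simp only [congruence_apply, det_mul, det_one]
  ring

lemma congruence_surjective {T : Matrix n n R} (hT : IsUnit T) :
    Function.Surjective (congruence T) := fun X =>
  ⟨congruence T⁻¹ X, by
    rw [← congruence_mul, mul_nonsing_inv _ ((isUnit_iff_isUnit_det T).mp hT)]
    simp⟩

end CommRing

section PartialOrder

variable [CommRing R] [PartialOrder R] [StarRing R] {T X : Matrix n n R}

lemma posDef_congruence_iff (hT : IsUnit T) : (congruence T X).PosDef ↔ X.PosDef :=
  IsUnit.posDef_star_right_conjugate_iff hT

lemma posSemidef_congruence_iff (hT : IsUnit T) :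
    (congruence T X).PosSemidef ↔ X.PosSemidef :=
  IsUnit.posSemidef_star_right_conjugate_iff hT

end PartialOrder

lemma log_det_congruence {T X : Matrix n n ℝ} (hT : IsUnit T) (hX : X.det ≠ 0) :
    Real.log (congruence T X).det = Real.log X.det + Real.log (congruence T 1).det := by
  rw [det_congruence, Real.log_mul hX]
  exact ((posDef_congruence_iff hT).2 PosDef.one).det_pos.ne'

lemma trace_inv_congruence_one_mul {T : Matrix n n ℝ} (hT : IsUnit T) (X : Matrix n n ℝ) :
    ((congruence T 1)⁻¹ * congruence T X).trace = X.trace := by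
  simp only [congruence_apply, Matrix.mul_one, Matrix.mul_inv_rev, Matrix.mul_assoc]
  rw [← Matrix.mul_assoc T⁻¹ T, nonsing_inv_mul _ ((isUnit_iff_isUnit_det T).mp hT),
    Matrix.one_mul, trace_mul_comm, Matrix.mul_assoc,
    mul_nonsing_inv _ ((isUnit_iff_isUnit_det _).mp hT.star), Matrix.mul_one]

lemma trace_inv_diagonal_mul {d : n → ℝ} (hd : ∀ i, d i ≠ 0) (X : Matrix n n ℝ) :
    ((diagonal d)⁻¹ * X).trace = ∑ i, X i i / d i := by
  have hinv : (diagonal d)⁻¹ = diagonal d⁻¹ := by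
    refine inv_eq_left_inv ?_
    rw [diagonal_mul_diagonal, ← diagonal_one]
    exact congrArg diagonal (funext fun i => inv_mul_cancel₀ (hd i))
  simp [hinv, trace, diagonal_mul, div_eq_inv_mul]

lemma PosDef.isUnit_sqrt {A : Matrix n n ℝ} (hA : A.PosDef) : IsUnit (CFC.sqrt A) :=
  (CFC.isUnit_sqrt_iff A hA.posSemidef.nonneg).2 hA.isUnit

lemma PosDef.congruence_sqrt_one {A : Matrix n n ℝ} (hA : A.PosDef) :
    congruence (CFC.sqrt A) 1 = A := by
  rw [congruence_apply, Matrix.mul_one, (CFC.sqrt_nonneg A).isSelfAdjoint.star_eq,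
    CFC.sqrt_mul_sqrt_self A hA.posSemidef.nonneg]

lemma PosDef.log_det_le_trace_sub_card {W : Matrix n n ℝ} (hW : W.PosDef) :
    Real.log W.det ≤ W.trace - Fintype.card n := by
  rw [hW.1.det_eq_prod_eigenvalues, hW.1.trace_eq_sum_eigenvalues]
  simp only [RCLike.ofReal_real_eq_id, id_eq]
  rw [Real.log_prod fun i _ => (hW.eigenvalues_pos i).ne', ← Finset.card_univ,
    ← nsmul_one, ← Finset.sum_const, ← Finset.sum_sub_distrib]
  exact Finset.sum_le_sum fun i _ => Real.log_le_sub_one_of_pos (hW.eigenvalues_pos i)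

/-- Concavity of `log det`: its graph lies below the tangent plane at `X`. -/
lemma PosDef.log_det_le {X Y : Matrix n n ℝ} (hX : X.PosDef) (hY : Y.PosDef) :
    Real.log Y.det ≤ Real.log X.det + (X⁻¹ * Y).trace - Fintype.card n := by
  obtain ⟨S, hS, rfl⟩ : ∃ S, IsUnit S ∧ congruence S 1 = X :=
    ⟨_, hX.isUnit_sqrt, hX.congruence_sqrt_one⟩
  obtain ⟨W, rfl⟩ := congruence_surjective hS Y
  have hW : W.PosDef := (posDef_congruence_iff hS).1 hY
  rw [log_det_congruence hS hW.det_pos.ne', trace_inv_congruence_one_mul hS]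
  linarith [hW.log_det_le_trace_sub_card]

end Matrix

/-- The diagonal entry of `Y*` belonging to the eigenvalue `l` of `I − A^{−1/2} B A^{−1/2}`,
in the coordinates where `A = I`. -/
noncomputable def optimalWeight (ki kj l : ℝ) : ℝ := ki * kj / (ki + kj) * max l 0

section OptimalWeight

variable {ki kj l : ℝ}

lemma optimalWeight_nonneg (hki : 0 < ki) (hkj : 0 < kj) : 0 ≤ optimalWeight ki kj l := by
  unfold optimalWeight; positivity

lemma optimalWeight_of_nonpos (hl : l ≤ 0) : optimalWeight ki kj l = 0 := by
  simp [optimalWeight, max_eq_right hl]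

lemma one_sub_inv_mul_optimalWeight (hki : 0 < ki) (hkj : 0 < kj) (hl : 0 ≤ l) :
    1 - ki⁻¹ * optimalWeight ki kj l = (ki + kj * (1 - l)) / (ki + kj) := by
  rw [optimalWeight, max_eq_left hl]
  field_simp
  ring

lemma one_sub_add_inv_mul_optimalWeight (hki : 0 < ki) (hkj : 0 < kj) (hl : 0 ≤ l) :
    1 - l + kj⁻¹ * optimalWeight ki kj l = (ki + kj * (1 - l)) / (ki + kj) := by
  rw [optimalWeight, max_eq_left hl]
  field_simp
  ring

variable (hki : 0 < ki) (hkj : 0 < kj) (hfeas : 0 < ki + kj * (1 - l))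
include hki hkj hfeas

lemma one_sub_inv_mul_optimalWeight_pos : 0 < 1 - ki⁻¹ * optimalWeight ki kj l := by
  rcases le_total l 0 with hl | hl
  · simp [optimalWeight_of_nonpos hl]
  · rw [one_sub_inv_mul_optimalWeight hki hkj hl]; positivity

lemma one_sub_add_inv_mul_optimalWeight_pos : 0 < 1 - l + kj⁻¹ * optimalWeight ki kj l := by
  rcases le_total l 0 with hl | hl
  · simp [optimalWeight_of_nonpos hl]; linarith
  · rw [one_sub_add_inv_mul_optimalWeight hki hkj hl]; positivity

/-- The first-order optimality condition in one diagonal coordinate. -/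
lemma optimalWeight_kkt {w : ℝ} (hw : 0 ≤ w) :
    ki * ((1 - ki⁻¹ * w) / (1 - ki⁻¹ * optimalWeight ki kj l)) +
      kj * ((1 - l + kj⁻¹ * w) / (1 - l + kj⁻¹ * optimalWeight ki kj l)) ≤ ki + kj := by
  rcases le_total l 0 with hl | hl
  · have h1l : 1 - l ≠ 0 := by linarith
    have hsum : ki * (1 - ki⁻¹ * w) + kj * ((1 - l + kj⁻¹ * w) / (1 - l)) =
        ki + kj - w + w / (1 - l) := by
      field_simp
      ring
    simp only [optimalWeight_of_nonpos hl, mul_zero, sub_zero, add_zero, div_one, hsum]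
    linarith [div_le_self hw (by linarith : 1 ≤ 1 - l)]
  · rw [one_sub_inv_mul_optimalWeight hki hkj hl, one_sub_add_inv_mul_optimalWeight hki hkj hl]
    field_simp
    linarith

end OptimalWeight

section DiagonalFeasible

variable {n : Type*} [DecidableEq n] {ki kj : ℝ} {l : n → ℝ}

lemma diagonal_optimalWeight_feasible (hki : 0 < ki) (hkj : 0 < kj)
    (hfeas : ∀ i, 0 < ki + kj * (1 - l i)) :
    (diagonal fun i => optimalWeight ki kj (l i)).PosSemidef ∧
      (1 - ki⁻¹ • diagonal fun i => optimalWeight ki kj (l i)).PosDef ∧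
      (diagonal (1 - l) + kj⁻¹ • diagonal fun i => optimalWeight ki kj (l i)).PosDef := by
  rw [one_sub_smul_diagonal, diagonal_add_smul_diagonal, posSemidef_diagonal_iff,
    posDef_diagonal_iff, posDef_diagonal_iff]
  exact ⟨fun i => optimalWeight_nonneg hki hkj,
    fun i => one_sub_inv_mul_optimalWeight_pos hki hkj (hfeas i),
    fun i => one_sub_add_inv_mul_optimalWeight_pos hki hkj (hfeas i)⟩

end DiagonalFeasible

noncomputable def logDetObjective {n : Type*} [Fintype n] [DecidableEq n] (ki kj : ℝ)
    (A B Y : Matrix n n ℝ) : ℝ :=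
  ki * Real.log (A - ki⁻¹ • Y).det + kj * Real.log (B + kj⁻¹ • Y).det

section LogDetObjective

variable {n : Type*} [Fintype n] [DecidableEq n] {ki kj : ℝ}

lemma logDetObjective_congruence {T A B Y : Matrix n n ℝ} (hT : IsUnit T)
    (hA : (A - ki⁻¹ • Y).det ≠ 0) (hB : (B + kj⁻¹ • Y).det ≠ 0) :
    logDetObjective ki kj (congruence T A) (congruence T B) (congruence T Y) =
      logDetObjective ki kj A B Y + (ki + kj) * Real.log (congruence T 1).det := by
  rw [logDetObjective, logDetObjective, ← map_smul, ← map_sub, ← map_smul, ← map_add,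
    log_det_congruence hT hA, log_det_congruence hT hB]
  ring

variable {l : n → ℝ} (hki : 0 < ki) (hkj : 0 < kj) (hfeas : ∀ i, 0 < ki + kj * (1 - l i))
include hki hkj hfeas

theorem logDetObjective_le_diagonal_optimalWeight {Z : Matrix n n ℝ} (hZ : Z.PosSemidef)
    (hZA : (1 - ki⁻¹ • Z).PosDef) (hZB : (diagonal (1 - l) + kj⁻¹ • Z).PosDef) :
    logDetObjective ki kj 1 (diagonal (1 - l)) Z ≤
      logDetObjective ki kj 1 (diagonal (1 - l)) (diagonal fun i => optimalWeight ki kj (l i)) := by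
  have hp1 i := one_sub_inv_mul_optimalWeight_pos hki hkj (hfeas i)
  have hp2 i := one_sub_add_inv_mul_optimalWeight_pos hki hkj (hfeas i)
  have tangentA := (posDef_diagonal_iff.2 hp1).log_det_le hZA
  have tangentB := (posDef_diagonal_iff.2 hp2).log_det_le hZB
  rw [trace_inv_diagonal_mul fun i => (hp1 i).ne'] at tangentA
  rw [trace_inv_diagonal_mul fun i => (hp2 i).ne'] at tangentB
  have firstOrder :
      ki * ∑ i, (1 - ki⁻¹ • Z) i i / (1 - ki⁻¹ * optimalWeight ki kj (l i)) +
        kj * ∑ i, (diagonal (1 - l) + kj⁻¹ • Z : Matrix n n ℝ) i i /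
          (1 - l i + kj⁻¹ * optimalWeight ki kj (l i)) ≤ (ki + kj) * Fintype.card n := by
    rw [Finset.mul_sum, Finset.mul_sum, ← Finset.sum_add_distrib, ← nsmul_eq_mul',
      ← Finset.card_univ, ← Finset.sum_const]
    refine Finset.sum_le_sum fun i _ => ?_
    simpa using optimalWeight_kkt hki hkj (hfeas i) (hZ.diag_nonneg (i := i))
  rw [logDetObjective, logDetObjective, one_sub_smul_diagonal, diagonal_add_smul_diagonal]
  simp only [Pi.sub_apply, Pi.one_apply]
  linarith [mul_le_mul_of_nonneg_left tangentA hki.le, mul_le_mul_of_nonneg_left tangentB hkj.le]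

end LogDetObjective

lemma exists_congruence_diagonal {p : ℕ} {A B : Matrix (Fin p) (Fin p) ℝ} (hA : A.PosDef)
    (hB : B.IsHermitian) :
    ∃ T : Matrix (Fin p) (Fin p) ℝ, ∃ l : Fin p → ℝ, IsUnit T ∧ A = congruence T 1 ∧
      B = congruence T (diagonal (1 - l)) ∧
      CFC.sqrt A * matPosPart (1 - (CFC.sqrt A)⁻¹ * B * (CFC.sqrt A)⁻¹) * CFC.sqrt A =
        congruence T (diagonal fun i => max (l i) 0) := by
  set S := CFC.sqrt A
  have hS : IsUnit S := hA.isUnit_sqrt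
  have hSS : star S = S := (CFC.sqrt_nonneg A).isSelfAdjoint.star_eq
  have hM : (1 - S⁻¹ * B * S⁻¹).IsHermitian := by
    have := isHermitian_conjTranspose_mul_mul S⁻¹ hB
    rw [conjTranspose_nonsing_inv, ← star_eq_conjTranspose, hSS] at this
    exact isHermitian_one.sub this
  set U : Matrix (Fin p) (Fin p) ℝ := (hM.eigenvectorUnitary : Matrix (Fin p) (Fin p) ℝ)
  have hUU : congruence U 1 = 1 := by simp [U]
  have hspec : congruence U (diagonal hM.eigenvalues) = 1 - S⁻¹ * B * S⁻¹ := by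
    simpa [U] using hM.spectral_theorem.symm
  refine ⟨S * U, hM.eigenvalues, hS.mul Unitary.isUnit_coe, ?_, ?_, ?_⟩
  · rw [congruence_mul, hUU, hA.congruence_sqrt_one]
  · have hSdet := (isUnit_iff_isUnit_det S).mp hS
    rw [congruence_mul, diagonal_one_sub, map_sub, hUU, hspec, sub_sub_cancel,
      congruence_apply, hSS, ← Matrix.mul_assoc, ← Matrix.mul_assoc, mul_nonsing_inv _ hSdet,
      Matrix.one_mul, Matrix.mul_assoc, nonsing_inv_mul _ hSdet, Matrix.mul_one]
  · rw [congruence_mul, congruence_apply S, hSS, congruence_apply, matPosPart, dif_pos hM]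

theorem stmt0_general {p : ℕ} (ki kj : ℝ) (hki : 0 < ki) (hkj : 0 < kj)
    (A B : Matrix (Fin p) (Fin p) ℝ) (hBs : B.IsSymm)
    (hA : A.PosDef) (hfeas : (ki • A + kj • B).PosDef)
    (sqrtA : Matrix (Fin p) (Fin p) ℝ) (hsqrtA : sqrtA = CFC.sqrt A)
    (Ystar : Matrix (Fin p) (Fin p) ℝ)
    (hYstar : Ystar = (ki * kj / (ki + kj)) •
      (sqrtA * matPosPart (1 - sqrtA⁻¹ * B * sqrtA⁻¹) * sqrtA)) :
    Ystar.PosSemidef ∧ (Ystar + kj • B).PosDef ∧ (ki • A - Ystar).PosDef ∧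
    ∀ Y : Matrix (Fin p) (Fin p) ℝ, Y.IsSymm → Y.PosSemidef →
      (Y + kj • B).PosDef → (ki • A - Y).PosDef →
      ki * Real.log (A - ki⁻¹ • Y).det + kj * Real.log (B + kj⁻¹ • Y).det ≤
        ki * Real.log (A - ki⁻¹ • Ystar).det + kj * Real.log (B + kj⁻¹ • Ystar).det := by
  obtain ⟨T, l, hT, rfl, rfl, hposPart⟩ :=
    exists_congruence_diagonal hA (isHermitian_iff_isSymm.2 hBs)
  obtain rfl : Ystar = congruence T (diagonal fun i => optimalWeight ki kj (l i)) := by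
    rw [hYstar, hsqrtA, hposPart, ← map_smul, ← diagonal_smul]; rfl
  have hl : ∀ i, 0 < ki + kj * (1 - l i) := by
    rw [← map_smul, ← map_smul, ← map_add, posDef_congruence_iff hT, ← diagonal_one',
      ← diagonal_smul, ← diagonal_smul, diagonal_add, posDef_diagonal_iff] at hfeas
    simpa using hfeas
  obtain ⟨hZpsd, hZA, hZB⟩ := diagonal_optimalWeight_feasible hki hkj hl
  have hYA := (posDef_congruence_iff hT).2 hZA
  have hYB := (posDef_congruence_iff hT).2 hZB
  rw [map_sub, map_smul] at hYA
  rw [map_add, map_smul] at hYB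
  refine ⟨(posSemidef_congruence_iff hT).2 hZpsd, (posDef_add_inv_smul_iff hkj).1 hYB,
    (posDef_sub_inv_smul_iff hki).1 hYA, fun Y _ hY hYB hYA => ?_⟩
  obtain ⟨Z, rfl⟩ := congruence_surjective hT Y
  rw [← posDef_add_inv_smul_iff hkj, ← map_smul, ← map_add, posDef_congruence_iff hT] at hYB
  rw [← posDef_sub_inv_smul_iff hki, ← map_smul, ← map_sub, posDef_congruence_iff hT] at hYA
  have hopt := logDetObjective_le_diagonal_optimalWeight hki hkj hl
    ((posSemidef_congruence_iff hT).1 hY) hYA hYB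
  show logDetObjective ki kj _ _ _ ≤ logDetObjective ki kj _ _ _
  rw [logDetObjective_congruence hT hYA.det_pos.ne' hYB.det_pos.ne',
    logDetObjective_congruence hT hZA.det_pos.ne' hZB.det_pos.ne']
  linarith

/-- `Y* := (kᵢkⱼ/(kᵢ+kⱼ)) A^{1/2} (I − A^{−1/2} B A^{−1/2})₊ A^{1/2}` is
feasible for the subproblem `max kᵢ log det(A − Y/kᵢ) + kⱼ log det(B + Y/kⱼ)` subject to
`Y ⪰ O`, `−kⱼB ≺ Y ≺ kᵢA`, and it is optimal. -/
theorem stmt0 {p : ℕ} (hp : 1 ≤ p) (ki kj : ℝ) (hki : 0 < ki) (hkj : 0 < kj)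
    (A B : Matrix (Fin p) (Fin p) ℝ) (hAs : A.IsSymm) (hBs : B.IsSymm)
    (hA : A.PosDef) (hfeas : (ki • A + kj • B).PosDef)
    (sqrtA : Matrix (Fin p) (Fin p) ℝ) (hsqrtA : sqrtA = CFC.sqrt A)
    (Ystar : Matrix (Fin p) (Fin p) ℝ)
    (hYstar : Ystar = (ki * kj / (ki + kj)) •
      (sqrtA * matPosPart (1 - sqrtA⁻¹ * B * sqrtA⁻¹) * sqrtA)) :
    Ystar.PosSemidef ∧ (Ystar + kj • B).PosDef ∧ (ki • A - Ystar).PosDef ∧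
    ∀ Y : Matrix (Fin p) (Fin p) ℝ, Y.IsSymm → Y.PosSemidef →
      (Y + kj • B).PosDef → (ki • A - Y).PosDef →
      ki * Real.log (A - ki⁻¹ • Y).det + kj * Real.log (B + kj⁻¹ • Y).det ≤
        ki * Real.log (A - ki⁻¹ • Ystar).det + kj * Real.log (B + kj⁻¹ • Ystar).det :=
  stmt0_general ki kj hki hkj A B hBs hA hfeas sqrtA hsqrtA Ystar hYstar
end

section
/- Let p ≥ 1, let k_j > 0 be a real number, let Γ be a symmetric positive definite real p×p matrix, and let B be a symmetric real p×p matrix. Define Y* := k_j · Γ^{1/2} (I − Γ^{−1/2} B Γ^{−1/2})₊ Γ^{1/2}. Then Y* ⪰ O, −k_j·B ≺ Y*, and for every symmetric Y with Y ⪰ O and −k_j·B ≺ Y one has −trace(Y Γ^{−1}) + k_j·log det(B + Y/k_j) ≤ −trace(Y* Γ^{−1}) + k_j·log det(B + Y*/k_j). -/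
/-- The square root of a positive semidefinite matrix, as `Matrix.PosSemidef.sqrt` was defined
in the older Mathlib (removed since). -/
noncomputable def Matrix.PosSemidef.sqrt {n : Type*} [Fintype n] [DecidableEq n]
    {A : Matrix n n ℝ} (hA : A.PosSemidef) : Matrix n n ℝ :=
  (hA.1.eigenvectorUnitary : Matrix n n ℝ) *
    Matrix.diagonal ((↑) ∘ (Real.sqrt ·) ∘ hA.1.eigenvalues) *
    (star hA.1.eigenvectorUnitary : Matrix n n ℝ)

namespace Matrix

section Scaling

variable {n : Type*}

theorem posSemidef_smul_iff {k : ℝ} (hk : 0 < k) {A : Matrix n n ℝ} :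
    (k • A).PosSemidef ↔ A.PosSemidef :=
  ⟨fun h => by simpa [hk.ne'] using h.smul (inv_nonneg.mpr hk.le), (·.smul hk.le)⟩

theorem posDef_smul_iff {k : ℝ} (hk : 0 < k) {A : Matrix n n ℝ} :
    (k • A).PosDef ↔ A.PosDef :=
  ⟨fun h => by simpa [hk.ne'] using h.smul (inv_pos.mpr hk), (·.smul hk)⟩

end Scaling

variable {n : Type*} [Fintype n] [DecidableEq n]

theorem PosSemidef.posSemidef_sqrt {A : Matrix n n ℝ} (hA : A.PosSemidef) :
    hA.sqrt.PosSemidef := by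
  have h := (posSemidef_diagonal_iff.mpr fun i => by simp [Real.sqrt_nonneg] :
    (diagonal ((↑) ∘ (Real.sqrt ·) ∘ hA.1.eigenvalues : n → ℝ)).PosSemidef)
  simpa [PosSemidef.sqrt, star_eq_conjTranspose] using
    h.mul_mul_conjTranspose_same (hA.1.eigenvectorUnitary : Matrix n n ℝ)

theorem PosSemidef.sqrt_mul_self {A : Matrix n n ℝ} (hA : A.PosSemidef) :
    hA.sqrt * hA.sqrt = A := by
  conv_rhs => rw [hA.1.spectral_theorem, Unitary.conjStarAlgAut_apply]
  set U : Matrix n n ℝ := hA.1.eigenvectorUnitary.1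
  have hU : star U * U = 1 := Unitary.coe_star_mul_self _
  calc hA.sqrt * hA.sqrt
      = U * (diagonal ((↑) ∘ (Real.sqrt ·) ∘ hA.1.eigenvalues) * (star U * U) *
          diagonal ((↑) ∘ (Real.sqrt ·) ∘ hA.1.eigenvalues)) * star U := by
        simp only [PosSemidef.sqrt, U, Matrix.mul_assoc]
    _ = _ := by
        rw [hU, Matrix.mul_one, diagonal_mul_diagonal]
        congr 3 with i
        simp [Real.mul_self_sqrt (hA.eigenvalues_nonneg i)]

theorem PosDef.posDef_sqrt {A : Matrix n n ℝ} (hA : A.PosDef) : hA.posSemidef.sqrt.PosDef := by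
  refine hA.posSemidef.posSemidef_sqrt.posDef_iff_det_ne_zero.mpr fun h => hA.det_pos.ne' ?_
  rw [← hA.posSemidef.sqrt_mul_self, det_mul, h, zero_mul]

theorem PosSemidef.trace_mul_nonneg {A B : Matrix n n ℝ} (hA : A.PosSemidef)
    (hB : B.PosSemidef) : 0 ≤ (A * B).trace := by
  rw [← hA.sqrt_mul_self, Matrix.mul_assoc, trace_mul_comm, Matrix.mul_assoc]
  have h := (hB.conjTranspose_mul_mul_same hA.sqrt).trace_nonneg
  rwa [hA.posSemidef_sqrt.1.eq, Matrix.mul_assoc] at h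

theorem PosDef.log_det_le_trace_sub_card_s1 {C : Matrix n n ℝ} (hC : C.PosDef) :
    Real.log C.det ≤ C.trace - Fintype.card n := by
  have hμ := hC.eigenvalues_pos
  rw [hC.1.det_eq_prod_eigenvalues, hC.1.trace_eq_sum_eigenvalues]
  simp only [RCLike.ofReal_real_eq_id, id]
  rw [Real.log_prod fun i _ => (hμ i).ne', ← Finset.card_univ, Finset.card_eq_sum_ones,
    Nat.cast_sum, ← Finset.sum_sub_distrib]
  exact Finset.sum_le_sum fun i _ => by simpa using Real.log_le_sub_one_of_pos (hμ i)

theorem PosDef.log_det_le_log_det_add_trace_inv_mul_sub_card {W W₀ : Matrix n n ℝ}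
    (hW : W.PosDef) (hW₀ : W₀.PosDef) :
    Real.log W.det ≤ Real.log W₀.det + (W₀⁻¹ * W).trace - Fintype.card n := by
  set T := hW₀.posSemidef.sqrt
  have hT : T.PosDef := hW₀.posDef_sqrt
  have hTT : T * T = W₀ := hW₀.posSemidef.sqrt_mul_self
  have hTinv : star T⁻¹ = T⁻¹ := by rw [star_eq_conjTranspose, hT.1.inv.eq]
  have hC : (T⁻¹ * W * T⁻¹).PosDef := by
    have h := (IsUnit.posDef_star_left_conjugate_iff (isUnit_nonsing_inv_iff.mpr hT.isUnit)).mpr hW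
    rwa [hTinv] at h
  have hdet : (T⁻¹ * W * T⁻¹).det = W.det / W₀.det := by
    rw [← hTT, det_mul, det_mul, det_mul, det_nonsing_inv, Ring.inverse_eq_inv']
    have : T.det ≠ 0 := hT.det_pos.ne'
    field_simp
  have htrace : (T⁻¹ * W * T⁻¹).trace = (W₀⁻¹ * W).trace := by
    rw [trace_mul_cycle, ← Matrix.mul_inv_rev, hTT]
  have h := hC.log_det_le_trace_sub_card_s1
  rw [hdet, htrace, Real.log_div hW.det_pos.ne' hW₀.det_pos.ne'] at h
  linarith

section Congruence

variable {k : ℝ} {S : Matrix n n ℝ}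

theorem PosDef.posSemidef_smul_conj_iff (hk : 0 < k) (hS : S.PosDef) {Z : Matrix n n ℝ} :
    (k • (S * Z * S)).PosSemidef ↔ Z.PosSemidef := by
  have h := IsUnit.posSemidef_star_left_conjugate_iff (x := Z) hS.isUnit
  rwa [star_eq_conjTranspose, hS.1.eq, ← posSemidef_smul_iff hk] at h

theorem PosDef.posDef_smul_conj_add_smul_conj_iff (hk : 0 < k) (hS : S.PosDef)
    {M Z : Matrix n n ℝ} : (k • (S * Z * S) + k • (S * M * S)).PosDef ↔ (M + Z).PosDef := by
  have h := IsUnit.posDef_star_left_conjugate_iff (x := M + Z) hS.isUnit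
  rwa [star_eq_conjTranspose, hS.1.eq, ← posDef_smul_iff hk, Matrix.mul_add, Matrix.add_mul,
    smul_add, add_comm] at h

theorem neg_trace_smul_conj_mul_inv_add_mul_log_det (hk : k ≠ 0) (hS : IsUnit S.det)
    {M Z : Matrix n n ℝ} (hMZ : (M + Z).det ≠ 0) :
    -(k • (S * Z * S) * (S * S)⁻¹).trace + k * Real.log (S * M * S + k⁻¹ • k • (S * Z * S)).det =
      k * (-Z.trace + Real.log (M + Z).det) + k * Real.log (S * S).det := by
  have htrace : (S * Z * S * (S * S)⁻¹).trace = Z.trace := by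
    rw [Matrix.mul_inv_rev, ← Matrix.mul_assoc, Matrix.mul_assoc (S * Z), mul_nonsing_inv _ hS,
      Matrix.mul_one, trace_mul_cycle, nonsing_inv_mul _ hS, Matrix.one_mul]
  have hdet : (S * M * S + S * Z * S).det = (S * S).det * (M + Z).det := by
    rw [← Matrix.add_mul, ← Matrix.mul_add, det_mul, det_mul, det_mul]
    ring
  rw [inv_smul_smul₀ hk, hdet, Real.log_mul (by simpa [det_mul] using hS.ne_zero) hMZ,
    Matrix.smul_mul, trace_smul, htrace, smul_eq_mul]
  ring

end Congruence

section ConjDiagonal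

variable (U : unitaryGroup n ℝ)

noncomputable def conjDiagonal : (n → ℝ) →ₐ[ℝ] Matrix n n ℝ :=
  ((Unitary.conjStarAlgAut ℝ _ U : Matrix n n ℝ →⋆ₐ[ℝ] Matrix n n ℝ)).toAlgHom.comp
    (diagonalAlgHom ℝ)

theorem conjDiagonal_apply (d : n → ℝ) :
    conjDiagonal U d = (U : Matrix n n ℝ) * diagonal d * (star U : Matrix n n ℝ) := rfl

theorem posSemidef_conjDiagonal {d : n → ℝ} (hd : 0 ≤ d) : (conjDiagonal U d).PosSemidef := by
  rw [conjDiagonal_apply, star_eq_conjTranspose]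
  exact (posSemidef_diagonal_iff.mpr hd).mul_mul_conjTranspose_same _

theorem posDef_conjDiagonal {d : n → ℝ} (hd : ∀ i, 0 < d i) : (conjDiagonal U d).PosDef := by
  rw [conjDiagonal_apply,
    IsUnit.posDef_star_right_conjugate_iff (Unitary.isUnit_coe (U := U))]
  exact posDef_diagonal_iff.mpr hd

theorem conjDiagonal_inv {d : n → ℝ} (hd : ∀ i, d i ≠ 0) :
    (conjDiagonal U d)⁻¹ = conjDiagonal U d⁻¹ := by
  refine inv_eq_right_inv ?_
  rw [← map_mul, ← map_one (conjDiagonal U)]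
  congr 1 with i
  exact mul_inv_cancel₀ (hd i)

theorem IsHermitian.eq_conjDiagonal {A : Matrix n n ℝ} (hA : A.IsHermitian) :
    A = conjDiagonal hA.eigenvectorUnitary hA.eigenvalues := by
  conv_lhs => rw [hA.spectral_theorem]
  simp [conjDiagonal_apply, RCLike.ofReal_real_eq_id]

end ConjDiagonal

variable {p : ℕ}

theorem IsHermitian.matPosPart_eq {A : Matrix (Fin p) (Fin p) ℝ} (hA : A.IsHermitian) :
    matPosPart A = conjDiagonal hA.eigenvectorUnitary fun i => max (hA.eigenvalues i) 0 := by
  rw [matPosPart, dif_pos hA]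
  rfl

theorem IsHermitian.posSemidef_matPosPart {A : Matrix (Fin p) (Fin p) ℝ} (hA : A.IsHermitian) :
    (matPosPart A).PosSemidef :=
  hA.matPosPart_eq ▸ posSemidef_conjDiagonal _ fun _ => le_max_right _ _

theorem IsHermitian.one_sub_add_matPosPart_eq {A : Matrix (Fin p) (Fin p) ℝ}
    (hA : A.IsHermitian) :
    1 - A + matPosPart A =
      conjDiagonal hA.eigenvectorUnitary fun i => max 1 (1 - hA.eigenvalues i) := by
  rw [hA.matPosPart_eq]
  nth_rewrite 1 [hA.eq_conjDiagonal]
  rw [← map_one (conjDiagonal hA.eigenvectorUnitary), ← map_sub, ← map_add]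
  congr 1 with i
  rw [Pi.add_apply, Pi.sub_apply, Pi.one_apply, ← max_add_add_left, sub_add_cancel, add_zero]

theorem IsHermitian.posDef_add_matPosPart_one_sub {M : Matrix (Fin p) (Fin p) ℝ}
    (hM : M.IsHermitian) : (M + matPosPart (1 - M)).PosDef := by
  obtain ⟨A, hA, rfl⟩ : ∃ A, A.IsHermitian ∧ M = 1 - A :=
    ⟨1 - M, isHermitian_one.sub hM, (sub_sub_cancel _ _).symm⟩
  rw [sub_sub_cancel, hA.one_sub_add_matPosPart_eq]
  exact posDef_conjDiagonal _ fun i => one_pos.trans_le (le_max_left _ _)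

theorem IsHermitian.neg_trace_add_log_det_le {M Z : Matrix (Fin p) (Fin p) ℝ}
    (hM : M.IsHermitian) (hZ : Z.PosSemidef) (hMZ : (M + Z).PosDef) :
    -Z.trace + Real.log (M + Z).det ≤
      -(matPosPart (1 - M)).trace + Real.log (M + matPosPart (1 - M)).det := by
  have hW₀ := hM.posDef_add_matPosPart_one_sub
  obtain ⟨A, hA, rfl⟩ : ∃ A, A.IsHermitian ∧ M = 1 - A :=
    ⟨1 - M, isHermitian_one.sub hM, (sub_sub_cancel _ _).symm⟩
  rw [sub_sub_cancel] at hW₀ ⊢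
  set U := hA.eigenvectorUnitary
  set W₀ := 1 - A + matPosPart A
  set w : Fin p → ℝ := fun i => max 1 (1 - hA.eigenvalues i)
  have hw : ∀ i, 1 ≤ w i := fun i => le_max_left _ _
  have hW₀inv : W₀⁻¹ = conjDiagonal U w⁻¹ := by
    rw [show W₀ = conjDiagonal U w from hA.one_sub_add_matPosPart_eq,
      conjDiagonal_inv _ fun i => (one_pos.trans_le (hw i)).ne']
  have hI : (1 - W₀⁻¹).PosSemidef := by
    rw [hW₀inv, ← map_one (conjDiagonal U), ← map_sub]
    exact posSemidef_conjDiagonal _ fun i => sub_nonneg.mpr (inv_le_one_of_one_le₀ (hw i))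
  have hfix : W₀⁻¹ * matPosPart A = matPosPart A := by
    rw [hW₀inv, hA.matPosPart_eq, ← map_mul]
    congr 1 with i
    rcases le_total (hA.eigenvalues i) 0 with h | h
    · simp [max_eq_right h]
    · simp [w, max_eq_left h, max_eq_left (sub_le_self 1 h)]
  have htrace : (W₀⁻¹ * (1 - A + Z)).trace = p + (W₀⁻¹ * Z).trace - (matPosPart A).trace := by
    rw [show 1 - A + Z = W₀ + (Z - matPosPart A) by simp only [W₀]; abel, Matrix.mul_add,
      Matrix.mul_sub, nonsing_inv_mul _ hW₀.det_pos.ne'.isUnit, hfix, trace_add, trace_sub,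
      trace_one, Fintype.card_fin]
    ring
  have hZtrace : 0 ≤ ((1 - W₀⁻¹) * Z).trace := hI.trace_mul_nonneg hZ
  have htangent := hMZ.log_det_le_log_det_add_trace_inv_mul_sub_card hW₀
  rw [htrace, Fintype.card_fin] at htangent
  rw [Matrix.sub_mul, Matrix.one_mul, trace_sub] at hZtrace
  linarith

end Matrix

open Matrix

theorem stmt1_general {p : ℕ} (kj : ℝ) (hkj : 0 < kj)
    (Γ B : Matrix (Fin p) (Fin p) ℝ) (hΓ : Γ.PosDef) (hBs : B.IsSymm)
    (sqrtΓ : Matrix (Fin p) (Fin p) ℝ) (hsqrtΓ : sqrtΓ = hΓ.posSemidef.sqrt)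
    (Ystar : Matrix (Fin p) (Fin p) ℝ)
    (hYstar : Ystar = kj • (sqrtΓ * matPosPart (1 - sqrtΓ⁻¹ * B * sqrtΓ⁻¹) * sqrtΓ)) :
    Ystar.PosSemidef ∧ (Ystar + kj • B).PosDef ∧
    ∀ Y : Matrix (Fin p) (Fin p) ℝ, Y.IsSymm → Y.PosSemidef → (Y + kj • B).PosDef →
      -(Y * Γ⁻¹).trace + kj * Real.log (B + kj⁻¹ • Y).det ≤
        -(Ystar * Γ⁻¹).trace + kj * Real.log (B + kj⁻¹ • Ystar).det := by
  set S := sqrtΓ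
  have hS : S.PosDef := hsqrtΓ ▸ hΓ.posDef_sqrt
  have hSdet : IsUnit S.det := hS.det_pos.ne'.isUnit
  have hΓS : Γ = S * S := hsqrtΓ ▸ hΓ.posSemidef.sqrt_mul_self.symm
  set M := S⁻¹ * B * S⁻¹
  have hM : M.IsHermitian := by
    have hB : B.IsHermitian := by rwa [IsHermitian, conjTranspose_eq_transpose_of_trivial]
    simpa only [hS.1.inv.eq] using isHermitian_conjTranspose_mul_mul S⁻¹ hB
  have hBM : B = S * M * S := by
    simp only [M, ← Matrix.mul_assoc, mul_nonsing_inv _ hSdet, Matrix.one_mul]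
    rw [Matrix.mul_assoc, nonsing_inv_mul _ hSdet, Matrix.mul_one]
  subst hYstar
  rw [hΓS, hBM]
  refine ⟨(hS.posSemidef_smul_conj_iff hkj).mpr (isHermitian_one.sub hM).posSemidef_matPosPart,
    (hS.posDef_smul_conj_add_smul_conj_iff hkj).mpr hM.posDef_add_matPosPart_one_sub, ?_⟩
  intro Y _ hY hYM
  obtain ⟨Z, rfl⟩ : ∃ Z, Y = kj • (S * Z * S) := ⟨kj⁻¹ • (S⁻¹ * Y * S⁻¹), by
    simp only [Matrix.mul_smul, Matrix.smul_mul, smul_smul, mul_inv_cancel₀ hkj.ne', one_smul,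
      ← Matrix.mul_assoc, mul_nonsing_inv _ hSdet, Matrix.one_mul]
    rw [Matrix.mul_assoc, nonsing_inv_mul _ hSdet, Matrix.mul_one]⟩
  have hZ := (hS.posSemidef_smul_conj_iff hkj).mp hY
  have hMZ := (hS.posDef_smul_conj_add_smul_conj_iff hkj).mp hYM
  rw [neg_trace_smul_conj_mul_inv_add_mul_log_det hkj.ne' hSdet hMZ.det_pos.ne',
    neg_trace_smul_conj_mul_inv_add_mul_log_det hkj.ne' hSdet
      hM.posDef_add_matPosPart_one_sub.det_pos.ne']
  gcongr kj * ?_ + _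
  exact hM.neg_trace_add_log_det_le hZ hMZ

/-- `Y* := kⱼ Γ^{1/2} (I − Γ^{−1/2} B Γ^{−1/2})₊ Γ^{1/2}` satisfies
`Y* ⪰ O`, `−kⱼB ≺ Y*`, and maximizes `−trace(Y Γ⁻¹) + kⱼ log det(B + Y/kⱼ)` over all
symmetric `Y` with `Y ⪰ O` and `−kⱼB ≺ Y`. -/
theorem stmt1 {p : ℕ} (hp : 1 ≤ p) (kj : ℝ) (hkj : 0 < kj)
    (Γ B : Matrix (Fin p) (Fin p) ℝ) (hΓs : Γ.IsSymm) (hΓ : Γ.PosDef) (hBs : B.IsSymm)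
    (sqrtΓ : Matrix (Fin p) (Fin p) ℝ) (hsqrtΓ : sqrtΓ = hΓ.posSemidef.sqrt)
    (Ystar : Matrix (Fin p) (Fin p) ℝ)
    (hYstar : Ystar = kj • (sqrtΓ * matPosPart (1 - sqrtΓ⁻¹ * B * sqrtΓ⁻¹) * sqrtΓ)) :
    Ystar.PosSemidef ∧ (Ystar + kj • B).PosDef ∧
    ∀ Y : Matrix (Fin p) (Fin p) ℝ, Y.IsSymm → Y.PosSemidef → (Y + kj • B).PosDef →
      -(Y * Γ⁻¹).trace + kj * Real.log (B + kj⁻¹ • Y).det ≤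
        -(Ystar * Γ⁻¹).trace + kj * Real.log (B + kj⁻¹ • Ystar).det :=
  stmt1_general kj hkj Γ B hΓ hBs sqrtΓ hsqrtΓ Ystar hYstar
end

section
/- Let p ≥ 1, let k_i, k_j > 0 be real numbers, and let C be a symmetric real p×p matrix with −k_j·C ≺ k_i·I. Then the matrix X* := (k_i k_j/(k_i+k_j)) · (I − C)₊ satisfies X* ⪰ O, −k_j·C ≺ X*, and X* ≺ k_i·I. -/
open scoped MatrixOrder ComplexOrder

theorem matPosPart_eq_cfc {p : ℕ} {X : Matrix (Fin p) (Fin p) ℝ} (hX : X.IsHermitian) :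
    matPosPart X = cfc (fun x : ℝ => max x 0) X := by
  rw [matPosPart, dif_pos hX, hX.cfc_eq, Matrix.IsHermitian.cfc, Unitary.conjStarAlgAut_apply]
  rfl

namespace Matrix

variable {n 𝕜 : Type*} [Fintype n] [DecidableEq n] [RCLike 𝕜]

theorem posDef_cfc_iff {A : Matrix n n 𝕜} (hA : IsSelfAdjoint A) (f : ℝ → ℝ) :
    (cfc f A).PosDef ↔ ∀ x ∈ spectrum ℝ A, 0 < f x := by
  rw [← isStrictlyPositive_iff_posDef,
    cfc_isStrictlyPositive_iff f A (A.finite_real_spectrum.continuousOn f) hA]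

theorem posSemidef_cfc_iff {A : Matrix n n 𝕜} (hA : IsSelfAdjoint A) (f : ℝ → ℝ) :
    (cfc f A).PosSemidef ↔ ∀ x ∈ spectrum ℝ A, 0 ≤ f x := by
  rw [← nonneg_iff_posSemidef, cfc_nonneg_iff f A (A.finite_real_spectrum.continuousOn f) hA]

end Matrix

theorem mul_max_one_sub_bounds {a b x : ℝ} (ha : 0 < a) (hb : 0 < b) (hx : 0 < a + b * x) :
    0 < a * b / (a + b) * max (1 - x) 0 + b * x ∧ 0 < a - a * b / (a + b) * max (1 - x) 0 := by
  rcases le_total x 1 with h | h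
  · rw [max_eq_left (by linarith)]
    constructor
    · have : a * b / (a + b) * (1 - x) + b * x = b * (a + b * x) / (a + b) := by
        field_simp; ring
      rw [this]; positivity
    · have : a - a * b / (a + b) * (1 - x) = a * (a + b * x) / (a + b) := by
        field_simp; ring
      rw [this]; positivity
  · rw [max_eq_right (by linarith)]
    constructor <;> nlinarith

theorem stmt3_general {p : ℕ} (ki kj : ℝ) (hki : 0 < ki) (hkj : 0 < kj)
    (C : Matrix (Fin p) (Fin p) ℝ) (hCs : C.IsSymm)
    (hfeas : (ki • (1 : Matrix (Fin p) (Fin p) ℝ) + kj • C).PosDef)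
    (Xstar : Matrix (Fin p) (Fin p) ℝ)
    (hXstar : Xstar = (ki * kj / (ki + kj)) • matPosPart (1 - C)) :
    Xstar.PosSemidef ∧ (Xstar + kj • C).PosDef ∧
      (ki • (1 : Matrix (Fin p) (Fin p) ℝ) - Xstar).PosDef := by
  have hC : IsSelfAdjoint C := hCs
  have hX : Xstar = cfc (fun x : ℝ => ki * kj / (ki + kj) * max (1 - x) 0) C := by
    have h1C : 1 - C = cfc (fun x : ℝ => 1 - x) C := by
      rw [cfc_sub .., cfc_const_one .., cfc_id' ..]
    rw [hXstar, matPosPart_eq_cfc (Matrix.isHermitian_one.sub hCs), h1C, ← cfc_comp' ..,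
      cfc_const_mul ..]
  have hspec : ∀ x ∈ spectrum ℝ C, 0 < ki + kj * x := by
    rw [← Matrix.posDef_cfc_iff hC, cfc_const_add ki (fun x => kj * x) C, cfc_const_mul_id kj C,
      Algebra.algebraMap_eq_smul_one]
    exact hfeas
  refine ⟨?_, ?_, ?_⟩
  · rw [hX, Matrix.posSemidef_cfc_iff hC]
    intro x _
    positivity
  · rw [hX, ← cfc_const_mul_id (R := ℝ) kj C, ← cfc_add .., Matrix.posDef_cfc_iff hC]
    exact fun x hx => (mul_max_one_sub_bounds hki hkj (hspec x hx)).1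
  · rw [hX, ← Algebra.algebraMap_eq_smul_one, ← cfc_const ki C, ← cfc_sub ..,
      Matrix.posDef_cfc_iff hC]
    exact fun x hx => (mul_max_one_sub_bounds hki hkj (hspec x hx)).2

/-- If `−kⱼC ≺ kᵢI`, then `X* := (kᵢkⱼ/(kᵢ+kⱼ)) (I − C)₊` satisfies
`X* ⪰ O`, `−kⱼC ≺ X*`, and `X* ≺ kᵢI`. -/
theorem stmt3 {p : ℕ} (hp : 1 ≤ p) (ki kj : ℝ) (hki : 0 < ki) (hkj : 0 < kj)
    (C : Matrix (Fin p) (Fin p) ℝ) (hCs : C.IsSymm)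
    (hfeas : (ki • (1 : Matrix (Fin p) (Fin p) ℝ) + kj • C).PosDef)
    (Xstar : Matrix (Fin p) (Fin p) ℝ)
    (hXstar : Xstar = (ki * kj / (ki + kj)) • matPosPart (1 - C)) :
    Xstar.PosSemidef ∧ (Xstar + kj • C).PosDef ∧
      (ki • (1 : Matrix (Fin p) (Fin p) ℝ) - Xstar).PosDef :=
  stmt3_general ki kj hki hkj C hCs hfeas Xstar hXstar
end
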